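/- arXiv:math/0303314 — 3 statements merged into one kernel-verified Lean document; each statement's English description precedes it below -/
import Mathlib

section
/- Let R be a ring, M an R-module, N a submodule, and 𝒜 a class of injective R-modules. If c_𝒜(N) = N and N ≠ M, then for every nonzero submodule T/N of M/N (with N ⊊ T ⊆ M) there exists A ∈ 𝒜 and a nonzero R-module homomorphism T/N → A. -/
/-- The 𝒜-regular closure of a submodule `N` of `M`. -/
def regClosure {R : Type} [Ring R] {M : Type} [AddCommGroup M] [Module R M]
    (𝒜 : Set (ModuleCat R)) (N : Submodule R M) : Submodule R M :=
  sInf { p | ∃ A ∈ 𝒜, ∃ g : M →ₗ[R] A, N ≤ LinearMap.ker g ∧ p = LinearMap.ker g }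

theorem stmt_5 {R : Type} [Ring R] {M : Type} [AddCommGroup M] [Module R M]
    (𝒜 : Set (ModuleCat R)) (hinj : ∀ A ∈ 𝒜, Module.Injective R A)
    (N : Submodule R M) (hc : regClosure 𝒜 N = N) (hne : N ≠ ⊤) :
    ∀ T : Submodule R M, N < T →
      ∃ A ∈ 𝒜, ∃ g : (↥T ⧸ N.comap T.subtype) →ₗ[R] A, g ≠ 0 := by
  intro T hNT
  obtain ⟨x, hxT, hxN⟩ := SetLike.exists_of_lt hNT
  have hx : x ∉ regClosure 𝒜 N := by rw [hc]; exact hxN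
  rw [regClosure, Submodule.mem_sInf] at hx
  push_neg at hx
  obtain ⟨p, ⟨A, hA, g, hker, rfl⟩, hxp⟩ := hx
  refine ⟨A, hA, ?_⟩
  have hker' : N.comap T.subtype ≤ LinearMap.ker (g ∘ₗ T.subtype) := by
    intro t ht
    exact hker ht
  refine ⟨(N.comap T.subtype).liftQ (g ∘ₗ T.subtype) hker', ?_⟩
  intro h
  apply hxp
  have := congrArg (fun f => f ((N.comap T.subtype).mkQ ⟨x, hxT⟩)) h
  simpa using this
end

section
/- Let R be a free ideal ring (every left ideal is free of unique rank), self-injective, let 𝒜 = {R}, and let N be a submodule of an R-module M. If c_𝒜(N) = N and N ≠ M, then M/N has a direct summand which is a free R-module of positive rank. -/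
theorem exists_ne_zero_le_ker_of_regClosure_ne_top {R : Type} [Ring R] {M : Type}
    [AddCommGroup M] [Module R M] {𝒜 : Set (ModuleCat R)} {N : Submodule R M}
    (h : regClosure 𝒜 N ≠ ⊤) :
    ∃ A ∈ 𝒜, ∃ g : M →ₗ[R] A, N ≤ LinearMap.ker g ∧ g ≠ 0 := by
  by_contra! hall
  refine h (sInf_eq_top.2 ?_)
  rintro _ ⟨A, hA, g, hNg, rfl⟩
  exact LinearMap.ker_eq_top.2 (hall A hA g hNg)

namespace LinearMap

variable {R M P : Type*} [Ring R] [AddCommGroup M] [Module R M] [AddCommGroup P] [Module R P]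

theorem isCompl_range_ker_of_comp_eq_id {f : M →ₗ[R] P} {s : P →ₗ[R] M} (h : f ∘ₗ s = id) :
    IsCompl (range s) (ker f) := by
  have hfs : Function.LeftInverse f s := fun y => congr($h y)
  have hidem : IsIdempotentElem (s ∘ₗ f) := by
    ext x
    simp [hfs (f x)]
  have hrange : range (s ∘ₗ f) = range s :=
    range_comp_of_range_eq_top s (range_eq_top.2 fun y => ⟨s y, hfs y⟩)
  have hker : ker (s ∘ₗ f) = ker f :=
    ker_comp_of_ker_eq_bot f (ker_eq_bot_of_injective hfs.injective)
  simpa only [hrange, hker] using IsIdempotentElem.isCompl hidem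

theorem exists_isCompl_free_ne_bot_of_surjective [Module.Free R P] [Nontrivial P]
    (f : M →ₗ[R] P) (hf : Function.Surjective f) :
    ∃ A B : Submodule R M, IsCompl A B ∧ Module.Free R A ∧ A ≠ ⊥ := by
  obtain ⟨s, hs⟩ := f.exists_rightInverse_of_surjective (range_eq_top.2 hf)
  have hsinj : Function.Injective s := Function.LeftInverse.injective (g := f) fun y => congr($hs y)
  let e : P ≃ₗ[R] range s := LinearEquiv.ofInjective s hsinj
  have : Nontrivial (range s) := e.symm.toEquiv.nontrivial
  exact ⟨range s, ker f, isCompl_range_ker_of_comp_eq_id hs, Module.Free.of_equiv e,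
    Submodule.nontrivial_iff_ne_bot.1 this⟩

end LinearMap

theorem stmt_15_general {R : Type} [Ring R]
    (hfir : ∀ I : Submodule R R, Module.Free R ↥I)
    {M : Type} [AddCommGroup M] [Module R M] (N : Submodule R M)
    (hc : regClosure {ModuleCat.of R R} N = N) (hne : N ≠ ⊤) :
    ∃ P Q : Submodule R (M ⧸ N), IsCompl P Q ∧ Module.Free R ↥P ∧ P ≠ ⊥ := by
  obtain ⟨A, hA, g, hNg, hg⟩ := exists_ne_zero_le_ker_of_regClosure_ne_top (hc ▸ hne)
  obtain rfl := Set.mem_singleton_iff.1 hA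
  let gq : M ⧸ N →ₗ[R] R := N.liftQ g hNg
  have hgq : gq ≠ 0 := fun h0 => hg <| by
    rw [← N.liftQ_mkQ g hNg]
    exact congr($h0 ∘ₗ N.mkQ)
  have := hfir (LinearMap.range gq)
  have : Nontrivial (LinearMap.range gq) :=
    Submodule.nontrivial_iff_ne_bot.2 (LinearMap.range_eq_bot.not.2 hgq)
  exact gq.rangeRestrict.exists_isCompl_free_ne_bot_of_surjective gq.surjective_rangeRestrict

theorem stmt_15 {R : Type} [Ring R]
    (hfir : ∀ I : Submodule R R, Module.Free R ↥I)
    (hrank : ∀ (I : Submodule R R) (κ κ' : Type) (_ : Module.Basis κ R ↥I) (_ : Module.Basis κ' R ↥I),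
      Nonempty (κ ≃ κ'))
    (hinjR : Module.Injective R R)
    {M : Type} [AddCommGroup M] [Module R M] (N : Submodule R M)
    (hc : regClosure {ModuleCat.of R R} N = N) (hne : N ≠ ⊤) :
    ∃ P Q : Submodule R (M ⧸ N), IsCompl P Q ∧ Module.Free R ↥P ∧ P ≠ ⊥ :=
  stmt_15_general hfir N hc hne
end

section
/- Let R be a free ideal ring, self-injective, 𝒜 = {R}, and N a submodule of an R-module M. Then c_𝒜(N) = M if and only if M/N has no direct summand which is a free R-module of positive rank. -/
open LinearMap

theorem regClosure_eq_top_iff {R : Type} [Ring R] {M : Type} [AddCommGroup M] [Module R M]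
    (𝒜 : Set (ModuleCat R)) (N : Submodule R M) :
    regClosure 𝒜 N = ⊤ ↔ ∀ A ∈ 𝒜, ∀ g : M ⧸ N →ₗ[R] A, g = 0 := by
  simp only [regClosure, sInf_eq_top, Set.mem_ofPred_eq]
  constructor
  · intro h A hA g
    have hker : ker (g ∘ₗ N.mkQ) = ⊤ :=
      h _ ⟨A, hA, _, N.ker_mkQ.ge.trans (ker_le_ker_comp _ _), rfl⟩
    exact N.linearMap_qext (ker_eq_top.mp hker)
  · rintro h _ ⟨A, hA, g, hNg, rfl⟩
    rw [ker_eq_top, ← N.liftQ_mkQ g hNg, h A hA (N.liftQ g hNg), zero_comp]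

section

variable {R X Y : Type*} [Ring R] [AddCommGroup X] [Module R X] [AddCommGroup Y] [Module R Y]

theorem LinearMap.isCompl_range_ker_of_comp_eq_id_s16 {s : Y →ₗ[R] X} {g : X →ₗ[R] Y}
    (h : g ∘ₗ s = LinearMap.id) : IsCompl (range s) (ker g) := by
  have hidem : IsIdempotentElem (s ∘ₗ g) := by
    change s ∘ₗ g ∘ₗ s ∘ₗ g = s ∘ₗ g
    rw [← comp_assoc g, h, id_comp]
  have hrange : range (s ∘ₗ g) = range s :=
    range_comp_of_range_eq_top s (range_eq_top.mpr (surjective_of_comp_eq_id s g h))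
  have hker : ker (s ∘ₗ g) = ker g :=
    ker_comp_of_ker_eq_bot g (ker_eq_bot.mpr (injective_of_comp_eq_id s g h))
  simpa [hrange, hker] using hidem.isCompl

theorem LinearMap.exists_isCompl_linearEquiv_range (f : X →ₗ[R] Y)
    [Module.Projective R (range f)] :
    ∃ P Q : Submodule R X, IsCompl P Q ∧ Nonempty (P ≃ₗ[R] range f) := by
  obtain ⟨s, hs⟩ := f.rangeRestrict.exists_rightInverse_of_surjective f.range_rangeRestrict
  exact ⟨range s, ker f.rangeRestrict, isCompl_range_ker_of_comp_eq_id_s16 hs,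
    ⟨(LinearEquiv.ofInjective s (injective_of_comp_eq_id s _ hs)).symm⟩⟩

theorem Submodule.exists_dual_ne_zero_of_isCompl {P Q : Submodule R X} (hPQ : IsCompl P Q)
    [Module.Projective R P] (hP : P ≠ ⊥) : ∃ f : Module.Dual R X, f ≠ 0 := by
  obtain ⟨x, hx, hx0⟩ := P.exists_mem_ne_zero_of_ne_bot hP
  obtain ⟨φ, hφ⟩ := Module.Projective.exists_dual_ne_zero R (x := (⟨x, hx⟩ : P))
    (by simpa using hx0)
  refine ⟨φ ∘ₗ P.projectionOnto Q hPQ, fun h => hφ ?_⟩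
  simpa [Submodule.projectionOnto_apply_left hPQ ⟨x, hx⟩] using congr($h x)

end

theorem stmt_16_general {R : Type} [Ring R]
    (hfir : ∀ I : Submodule R R, Module.Free R ↥I)
    {M : Type} [AddCommGroup M] [Module R M] (N : Submodule R M) :
    regClosure {ModuleCat.of R R} N = ⊤ ↔
      ¬ ∃ P Q : Submodule R (M ⧸ N), IsCompl P Q ∧ Module.Free R ↥P ∧ P ≠ ⊥ := by
  simp only [regClosure_eq_top_iff, Set.mem_singleton_iff, forall_eq]
  constructor
  · rintro hdual ⟨P, Q, hPQ, hP, hP0⟩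
    obtain ⟨f, hf⟩ := P.exists_dual_ne_zero_of_isCompl hPQ hP0
    exact hf (hdual f)
  · intro hsummand f
    by_contra hf
    have : Module.Free R (range f) := hfir _
    obtain ⟨P, Q, hPQ, ⟨e⟩⟩ := f.exists_isCompl_linearEquiv_range
    refine hsummand ⟨P, Q, hPQ, .of_equiv e.symm, ?_⟩
    rintro rfl
    have : Subsingleton (range f) := e.symm.toEquiv.subsingleton
    exact hf (range_eq_bot.mp Submodule.eq_bot_of_subsingleton)

theorem stmt_16 {R : Type} [Ring R]
    (hfir : ∀ I : Submodule R R, Module.Free R ↥I)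
    (hrank : ∀ (I : Submodule R R) (κ κ' : Type) (_ : Module.Basis κ R ↥I) (_ : Module.Basis κ' R ↥I),
      Nonempty (κ ≃ κ'))
    (hinjR : Module.Injective R R)
    {M : Type} [AddCommGroup M] [Module R M] (N : Submodule R M) :
    regClosure {ModuleCat.of R R} N = ⊤ ↔
      ¬ ∃ P Q : Submodule R (M ⧸ N), IsCompl P Q ∧ Module.Free R ↥P ∧ P ≠ ⊥ :=
  stmt_16_general hfir N
end
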